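/- arXiv:0711.1789 — 8 statements merged into one kernel-verified Lean document; each statement's English description precedes it below -/
import Mathlib

section
/- For μ > 1, the variance of log f(X) when X ~ Gamma(μ,1) equals ψ'(μ)(μ-1)² - μ + 2, where f(x) = x^{μ-1}e^{-x}/Γ(μ) and ψ' is the trigamma function. -/
/-!
For `s > 0` differentiation under the Mellin integral gives
`Γ⁽ⁿ⁾(s) = ∫₀^∞ t^(s-1) (log t)^n e^(-t) dt`. Hence, for `X ~ Gamma(s, 1)`,
`E[X] = s`, `E[X²] = s(s+1)`, `E[log X] = Γ'/Γ`, `E[(log X)²] = Γ''/Γ`, and differentiating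
`Γ(s+1) = sΓ(s)` gives `E[X log X] = Γ'(s+1)/Γ(s) = 1 + sΓ'(s)/Γ(s)`. So `Var X = s`,
`Cov(X, log X) = 1` and `Var(log X) = (Γ'/Γ)' = ψ'(s)`. Since
`log f(X) = -X + (μ-1) log X - log Γ(μ)`, its variance is `μ - 2(μ-1) + (μ-1)² ψ'(μ)`.
-/

open Real MeasureTheory

/-- The digamma function ψ = Γ'/Γ. -/
noncomputable def digamma (x : ℝ) : ℝ := deriv Real.Gamma x / Real.Gamma x

/-- The trigamma function ψ' . -/
noncomputable def trigamma (x : ℝ) : ℝ := deriv digamma x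

open Filter Set Asymptotics Topology

theorem mellin_ofReal_eq_integral (f : ℝ → ℝ) (s : ℝ) :
    mellin (fun t => (f t : ℂ)) s = ((∫ t in Ioi 0, t ^ (s - 1) * f t : ℝ) : ℂ) := by
  rw [mellin, ← integral_complex_ofReal]
  refine setIntegral_congr_fun measurableSet_Ioi fun t ht => ?_
  rw [smul_eq_mul, ← Complex.ofReal_one, ← Complex.ofReal_sub, ← Complex.ofReal_cpow ht.le]
  push_cast
  rfl

theorem Asymptotics.IsBigO.ofReal_left {f g : ℝ → ℝ} {l : Filter ℝ} (h : f =O[l] g) :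
    (fun t => (f t : ℂ)) =O[l] g := by
  rw [← isBigO_norm_left]
  simpa only [Complex.norm_real] using h.norm_left

theorem hasDerivAt_integral_rpow_sub_one_mul {f : ℝ → ℝ} {a b s : ℝ}
    (hfc : LocallyIntegrableOn f (Ioi 0)) (hf_top : f =O[atTop] (· ^ (-a))) (hs_top : s < a)
    (hf_bot : f =O[𝓝[>] 0] (· ^ (-b))) (hs_bot : b < s) :
    HasDerivAt (fun s => ∫ t in Ioi 0, t ^ (s - 1) * f t)
      (∫ t in Ioi 0, t ^ (s - 1) * (log t * f t)) s := by
  have hfc' : LocallyIntegrableOn (fun t => (f t : ℂ)) (Ioi 0) := fun x hx =>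
    let ⟨u, hu, hfu⟩ := hfc x hx
    ⟨u, hu, hfu.ofReal⟩
  have hlog : (fun t : ℝ => log t • (f t : ℂ)) = fun t => ((log t * f t : ℝ) : ℂ) := by
    ext t
    simp
  have h := (mellin_hasDerivAt_of_isBigO_rpow (s := s) hfc' hf_top.ofReal_left hs_top
    hf_bot.ofReal_left hs_bot).2.real_of_complex
  simpa only [hlog, mellin_ofReal_eq_integral, Complex.ofReal_re] using h

theorem isBigO_log_pow_mul_exp_neg (n : ℕ) :
    (∀ a : ℝ, (fun t => log t ^ n * exp (-t)) =O[atTop] (· ^ (-a))) ∧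
      ∀ b : ℝ, 0 < b → (fun t => log t ^ n * exp (-t)) =O[𝓝[>] 0] (· ^ (-b)) := by
  induction n with
  | zero =>
    simp only [pow_zero, one_mul]
    refine ⟨fun a => ?_, fun b hb => ?_⟩
    · simpa only [neg_one_mul] using (isLittleO_exp_neg_mul_rpow_atTop zero_lt_one (-a)).isBigO
    · have hexp : (fun t => exp (-t)) =O[𝓝[>] (0 : ℝ)] (fun _ => (1 : ℝ)) :=
        ((continuous_exp.comp continuous_neg).tendsto' 0 1 (by simp)).mono_left
          nhdsWithin_le_nhds |>.isBigO_one ℝ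
      have hone : (fun _ => (1 : ℝ)) =o[𝓝[>] (0 : ℝ)] (fun t : ℝ => t ^ (-b)) :=
        isLittleO_const_left.2 <| Or.inr <|
          tendsto_norm_atTop_atTop.comp (tendsto_rpow_neg_nhdsGT_zero (neg_lt_zero.2 hb))
      exact hexp.trans hone.isBigO
  | succ n ih =>
    simp only [pow_succ', mul_assoc]
    exact ⟨fun a => isBigO_rpow_top_log_smul (lt_add_one a) (ih.1 (a + 1)),
      fun b hb => isBigO_rpow_zero_log_smul (half_lt_self hb) (ih.2 (b / 2) (half_pos hb))⟩

theorem continuousOn_log_pow_mul_exp_neg (n : ℕ) :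
    ContinuousOn (fun t => log t ^ n * exp (-t)) (Ioi 0) :=
  ((continuousOn_log.mono fun _ ht => (ne_of_gt ht)).pow n).mul (by fun_prop)

noncomputable def gammaLogMoment (n : ℕ) (s : ℝ) : ℝ :=
  ∫ t in Ioi 0, t ^ (s - 1) * (log t ^ n * exp (-t))

section gammaLogMoment

variable {s : ℝ}

theorem integrableOn_gammaLogMoment (n : ℕ) (hs : 0 < s) :
    IntegrableOn (fun t => t ^ (s - 1) * (log t ^ n * exp (-t))) (Ioi 0) :=
  mellin_convergent_of_isBigO_scalar
    ((continuousOn_log_pow_mul_exp_neg n).locallyIntegrableOn measurableSet_Ioi)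
    ((isBigO_log_pow_mul_exp_neg n).1 (s + 1)) (lt_add_one s)
    ((isBigO_log_pow_mul_exp_neg n).2 (s / 2) (half_pos hs)) (half_lt_self hs)

theorem hasDerivAt_gammaLogMoment (n : ℕ) (hs : 0 < s) :
    HasDerivAt (gammaLogMoment n) (gammaLogMoment (n + 1) s) s := by
  have h := hasDerivAt_integral_rpow_sub_one_mul
    ((continuousOn_log_pow_mul_exp_neg n).locallyIntegrableOn measurableSet_Ioi)
    ((isBigO_log_pow_mul_exp_neg n).1 (s + 1)) (lt_add_one s)
    ((isBigO_log_pow_mul_exp_neg n).2 (s / 2) (half_pos hs)) (half_lt_self hs)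
  have hsucc : gammaLogMoment (n + 1) s =
      ∫ t in Ioi 0, t ^ (s - 1) * (log t * (log t ^ n * exp (-t))) := by
    simp only [gammaLogMoment, pow_succ', mul_assoc]
  rwa [hsucc]

theorem gammaLogMoment_zero (hs : 0 < s) : gammaLogMoment 0 s = Gamma s := by
  simp only [gammaLogMoment, Gamma_eq_integral hs, pow_zero, one_mul, mul_comm]

theorem hasDerivAt_Gamma_of_pos (hs : 0 < s) : HasDerivAt Gamma (gammaLogMoment 1 s) s := by
  refine (hasDerivAt_gammaLogMoment 0 hs).congr_of_eventuallyEq ?_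
  filter_upwards [Ioi_mem_nhds hs] with x hx
  exact (gammaLogMoment_zero hx).symm

theorem gammaLogMoment_one_add_one (hs : 0 < s) :
    gammaLogMoment 1 (s + 1) = Gamma s + s * gammaLogMoment 1 s := by
  have hshift : HasDerivAt (fun x => Gamma (x + 1)) (gammaLogMoment 1 (s + 1)) s := by
    simpa using (hasDerivAt_Gamma_of_pos (by positivity)).comp_add_const s 1
  have hmul : HasDerivAt (fun x => x * Gamma x) (Gamma s + s * gammaLogMoment 1 s) s := by
    simpa using (hasDerivAt_id' s).fun_mul (hasDerivAt_Gamma_of_pos hs)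
  refine hshift.unique (hmul.congr_of_eventuallyEq ?_)
  filter_upwards [Ioi_mem_nhds hs] with x hx
  exact Gamma_add_one hx.ne'

theorem trigamma_eq_gammaLogMoment (hs : 0 < s) :
    trigamma s = gammaLogMoment 2 s / Gamma s - (gammaLogMoment 1 s / Gamma s) ^ 2 := by
  have hdigamma : digamma =ᶠ[𝓝 s] fun x => gammaLogMoment 1 x / Gamma x := by
    filter_upwards [Ioi_mem_nhds hs] with x hx
    rw [digamma, (hasDerivAt_Gamma_of_pos hx).deriv]
  have hΓ := (Gamma_pos_of_pos hs).ne'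
  rw [trigamma, hdigamma.deriv_eq,
    ((hasDerivAt_gammaLogMoment 1 hs).fun_div (hasDerivAt_Gamma_of_pos hs) hΓ).deriv]
  field_simp

end gammaLogMoment

theorem integral_mul_sq_sub_sq_integral_mul {α : Type*} [MeasurableSpace α] {ν : Measure α}
    {p u v : α → ℝ} (hp : Integrable p ν) (hpu : Integrable (fun x => p x * u x) ν)
    (hpv : Integrable (fun x => p x * v x) ν) (hpuu : Integrable (fun x => p x * u x ^ 2) ν)
    (hpuv : Integrable (fun x => p x * (u x * v x)) ν)
    (hpvv : Integrable (fun x => p x * v x ^ 2) ν) (hp1 : ∫ x, p x ∂ν = 1) (a b c : ℝ) :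
    ∫ x, p x * (a * u x + b * v x + c) ^ 2 ∂ν - (∫ x, p x * (a * u x + b * v x + c) ∂ν) ^ 2 =
      a ^ 2 * (∫ x, p x * u x ^ 2 ∂ν - (∫ x, p x * u x ∂ν) ^ 2)
      + 2 * a * b * (∫ x, p x * (u x * v x) ∂ν - (∫ x, p x * u x ∂ν) * ∫ x, p x * v x ∂ν)
      + b ^ 2 * (∫ x, p x * v x ^ 2 ∂ν - (∫ x, p x * v x ∂ν) ^ 2) := by
  have hsq : ∫ x, p x * (a * u x + b * v x + c) ^ 2 ∂ν =
      a ^ 2 * ∫ x, p x * u x ^ 2 ∂ν + 2 * a * b * ∫ x, p x * (u x * v x) ∂ν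
      + b ^ 2 * ∫ x, p x * v x ^ 2 ∂ν + 2 * a * c * ∫ x, p x * u x ∂ν
      + 2 * b * c * ∫ x, p x * v x ∂ν + c ^ 2 * ∫ x, p x ∂ν := by
    simp only [← integral_const_mul]
    repeat rw [← integral_add (by fun_prop) (by fun_prop)]
    exact integral_congr_ae (ae_of_all _ fun x => by ring)
  have hlin : ∫ x, p x * (a * u x + b * v x + c) ∂ν =
      a * ∫ x, p x * u x ∂ν + b * ∫ x, p x * v x ∂ν + c * ∫ x, p x ∂ν := by
    simp only [← integral_const_mul]
    repeat rw [← integral_add (by fun_prop) (by fun_prop)]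
    exact integral_congr_ae (ae_of_all _ fun x => by ring)
  rw [hsq, hlin, hp1]
  ring

noncomputable def gammaDensity (s x : ℝ) : ℝ := x ^ (s - 1) * exp (-x) / Gamma s

section gammaDensity

variable {s : ℝ}

theorem gammaDensity_mul_pow_mul_log_pow {t : ℝ} (ht : 0 < t) (i n : ℕ) :
    gammaDensity s t * (t ^ i * log t ^ n) =
      t ^ (s + i - 1) * (log t ^ n * exp (-t)) / Gamma s := by
  rw [gammaDensity, add_sub_right_comm, rpow_add ht, rpow_natCast]
  ring

theorem integrableOn_gammaDensity_mul_pow_mul_log_pow (hs : 0 < s) (i n : ℕ) :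
    IntegrableOn (fun t => gammaDensity s t * (t ^ i * log t ^ n)) (Ioi 0) :=
  IntegrableOn.congr_fun ((integrableOn_gammaLogMoment n (by positivity)).div_const _)
    (fun _ ht => (gammaDensity_mul_pow_mul_log_pow ht i n).symm) measurableSet_Ioi

theorem integral_gammaDensity_mul_pow_mul_log_pow (i n : ℕ) :
    ∫ t in Ioi 0, gammaDensity s t * (t ^ i * log t ^ n) =
      gammaLogMoment n (s + i) / Gamma s := by
  rw [gammaLogMoment, ← integral_div]
  exact setIntegral_congr_fun measurableSet_Ioi fun _ ht =>
    gammaDensity_mul_pow_mul_log_pow ht i n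

theorem integral_gammaDensity_mul_sq_sub_sq (hs : 0 < s) (a b c : ℝ) :
    (∫ x in Ioi 0, gammaDensity s x * (a * x + b * log x + c) ^ 2)
      - (∫ x in Ioi 0, gammaDensity s x * (a * x + b * log x + c)) ^ 2 =
      a ^ 2 * s + 2 * a * b + b ^ 2 * trigamma s := by
  have hint (i n : ℕ) : Integrable (fun x => gammaDensity s x * (x ^ i * log x ^ n))
      (volume.restrict (Ioi 0)) :=
    integrableOn_gammaDensity_mul_pow_mul_log_pow hs i n
  have hval := integral_gammaDensity_mul_pow_mul_log_pow (s := s)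
  have hone := hval 0 0
  have hX := hval 1 0
  have hX2 := hval 2 0
  have hlogX := hval 0 1
  have hlogX2 := hval 0 2
  have hXlogX := hval 1 1
  simp only [pow_zero, pow_one, mul_one, one_mul, Nat.cast_zero, Nat.cast_one, Nat.cast_ofNat,
    add_zero] at hone hX hX2 hlogX hlogX2 hXlogX
  have hΓ := (Gamma_pos_of_pos hs).ne'
  refine (integral_mul_sq_sub_sq_integral_mul (u := fun x => x) (v := log)
    (by simpa using hint 0 0) (by simpa using hint 1 0) (by simpa using hint 0 1)
    (by simpa using hint 2 0) (by simpa using hint 1 1) (by simpa using hint 0 2)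
    (by rw [hone, gammaLogMoment_zero hs, div_self hΓ]) a b c).trans ?_
  rw [hX, hX2, hlogX, hlogX2, hXlogX, gammaLogMoment_zero (by positivity),
    gammaLogMoment_zero (by positivity), gammaLogMoment_one_add_one hs,
    trigamma_eq_gammaLogMoment hs, show s + 2 = s + 1 + 1 by ring, Gamma_add_one (by positivity),
    Gamma_add_one hs.ne']
  field_simp
  ring

end gammaDensity

theorem song_gamma (μ : ℝ) (hμ : 1 < μ) :
    (∫ x in Set.Ioi (0:ℝ),
      (x ^ (μ - 1) * Real.exp (-x) / Real.Gamma μ) *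
        (Real.log (x ^ (μ - 1) * Real.exp (-x) / Real.Gamma μ)) ^ 2)
    - (∫ x in Set.Ioi (0:ℝ),
      (x ^ (μ - 1) * Real.exp (-x) / Real.Gamma μ) *
        Real.log (x ^ (μ - 1) * Real.exp (-x) / Real.Gamma μ)) ^ 2 =
    trigamma μ * (μ - 1) ^ 2 - μ + 2 := by
  have hμ0 : 0 < μ := by linarith
  have hlog : ∀ x ∈ Ioi (0 : ℝ),
      log (gammaDensity μ x) = -1 * x + (μ - 1) * log x + -log (Gamma μ) := by
    intro x (hx : 0 < x)
    rw [gammaDensity, log_div (by positivity) (Gamma_pos_of_pos hμ0).ne',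
      log_mul (by positivity) (exp_pos _).ne', log_rpow hx, log_exp]
    ring
  change (∫ x in Ioi 0, gammaDensity μ x * log (gammaDensity μ x) ^ 2)
    - (∫ x in Ioi 0, gammaDensity μ x * log (gammaDensity μ x)) ^ 2 = _
  rw [setIntegral_congr_fun measurableSet_Ioi fun x hx =>
      congrArg (fun y => gammaDensity μ x * y ^ 2) (hlog x hx),
    setIntegral_congr_fun measurableSet_Ioi fun x hx =>
      congrArg (gammaDensity μ x * ·) (hlog x hx),
    integral_gammaDensity_mul_sq_sub_sq hμ0]
  ring
end

section
/- For every natural number m ≥ 1 and every real p, ∫_{-π/2}^{π/2} (cos x)^{2m} exp(-p x) dx = (2m)! · 2 sinh(pπ/2) / [ p(p²+2²)(p²+4²)···(p²+(2m)²) ], provided p ≠ 0. -/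
/-!
Writing `I n = ∫_{-π/2}^{π/2} cos^n x e^{-px} dx`, two integrations by parts give
`((n+2)^2 + p^2) I (n+2) = (n+2)(n+1) I n`: the boundary terms carry a factor `cos^(n+1)`, which
vanishes at `±π/2`. Starting from `I 0 = 2 sinh(pπ/2) / p`, the recurrence over even `n` produces
the factorial in the numerator and one factor `p^2 + (2k)^2` of the denominator per step.
-/

open Real

theorem integral_neg_to_self_exp_neg_mul {p : ℝ} (hp : p ≠ 0) (a : ℝ) :
    ∫ x in (-a)..a, exp (-p * x) = 2 * sinh (p * a) / p := by
  rw [intervalIntegral.integral_comp_mul_left (fun x => exp x) (neg_ne_zero.mpr hp), integral_exp,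
    sinh_eq, smul_eq_mul, neg_mul_neg, neg_mul, inv_neg]
  field_simp
  ring

theorem hasDerivAt_exp_neg_mul (p x : ℝ) :
    HasDerivAt (fun x => exp (-p * x)) (exp (-p * x) * -p) x := by
  simpa using ((hasDerivAt_id x).const_mul (-p)).exp

theorem hasDerivAt_cos_pow_mul_exp_reduction (n : ℕ) (p x : ℝ) :
    HasDerivAt (fun x => exp (-p * x) * cos x ^ (n + 1) * ((n + 2) * sin x - p * cos x))
      (((n + 2) ^ 2 + p ^ 2) * (cos x ^ (n + 2) * exp (-p * x))
        - (n + 2) * (n + 1) * (cos x ^ n * exp (-p * x))) x := by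
  have h := ((hasDerivAt_exp_neg_mul p x).fun_mul ((hasDerivAt_cos x).fun_pow (n + 1))).fun_mul
    (((hasDerivAt_sin x).const_mul ((n : ℝ) + 2)).fun_sub ((hasDerivAt_cos x).const_mul p))
  refine h.congr_deriv ?_
  simp only [Nat.add_sub_cancel]
  push_cast
  linear_combination (-((n + 2) * (n + 1)) * exp (-p * x) * cos x ^ n) * sin_sq_add_cos_sq x

theorem integral_cos_pow_mul_exp_add_two (n : ℕ) (p : ℝ) :
    ((n + 2) ^ 2 + p ^ 2) * ∫ x in (-(π / 2))..(π / 2), cos x ^ (n + 2) * exp (-p * x) =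
      (n + 2) * (n + 1) * ∫ x in (-(π / 2))..(π / 2), cos x ^ n * exp (-p * x) := by
  have hint (k : ℕ) : IntervalIntegrable (fun x => cos x ^ k * exp (-p * x)) MeasureTheory.volume
      (-(π / 2)) (π / 2) := by
    apply Continuous.intervalIntegrable
    fun_prop
  have hFTC := intervalIntegral.integral_eq_sub_of_hasDerivAt
    (fun x _ => hasDerivAt_cos_pow_mul_exp_reduction n p x)
    (((hint (n + 2)).const_mul _).sub ((hint n).const_mul _))
  rw [intervalIntegral.integral_sub ((hint (n + 2)).const_mul _) ((hint n).const_mul _),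
    intervalIntegral.integral_const_mul, intervalIntegral.integral_const_mul] at hFTC
  simpa [cos_neg, sub_eq_zero] using hFTC

theorem cos_pow_even_exp_integral_general (m : ℕ) (p : ℝ) (hp : p ≠ 0) :
    ∫ x in (-(π/2))..(π/2), (Real.cos x) ^ (2*m) * Real.exp (-p * x) =
    (Nat.factorial (2*m) : ℝ) * 2 * Real.sinh (p * π / 2) /
      (p * ∏ k ∈ Finset.range m, (p^2 + ((2*(k+1) : ℕ) : ℝ)^2)) := by
  induction m with
  | zero => simpa [mul_div_assoc] using integral_neg_to_self_exp_neg_mul hp (π / 2)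
  | succ m ih =>
    have hrec := integral_cos_pow_mul_exp_add_two (2 * m) p
    have hfac : ((2 * (m + 1)).factorial : ℝ) = (2 * m + 2) * (2 * m + 1) * (2 * m).factorial := by
      rw [show 2 * (m + 1) = 2 * m + 1 + 1 by ring, Nat.factorial_succ, Nat.factorial_succ]
      push_cast
      ring
    rw [Finset.prod_range_succ, hfac, show 2 * (m + 1) = 2 * m + 2 by ring]
    rw [ih] at hrec
    push_cast at hrec ⊢
    field_simp at hrec ⊢
    linear_combination hrec

theorem cos_pow_even_exp_integral (m : ℕ) (hm : 1 ≤ m) (p : ℝ) (hp : p ≠ 0) :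
    ∫ x in (-(π/2))..(π/2), (Real.cos x) ^ (2*m) * Real.exp (-p * x) =
    (Nat.factorial (2*m) : ℝ) * 2 * Real.sinh (p * π / 2) /
      (p * ∏ k ∈ Finset.range m, (p^2 + ((2*(k+1) : ℕ) : ℝ)^2)) :=
  cos_pow_even_exp_integral_general m p hp
end

section
/- For every natural number m ≥ 0 and every real p, ∫_{-π/2}^{π/2} (cos x)^{2m+1} exp(-p x) dx = (2m+1)! · 2 cosh(pπ/2) / [ (p²+1²)(p²+3²)···(p²+(2m+1)²) ]. -/
open Real

lemma integrable_aux (n : ℕ) (p a b : ℝ) :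
    IntervalIntegrable (fun x => Real.cos x ^ n * Real.exp (-p * x)) MeasureTheory.volume a b :=
  (((Real.continuous_cos.pow n).mul (by continuity))).intervalIntegrable a b

lemma rec_step (n : ℕ) (p : ℝ) :
    (((n:ℝ)+2)^2 + p^2) * ∫ x in (-(π/2))..(π/2), Real.cos x ^ (n+2) * Real.exp (-p*x)
    = (((n:ℝ)+2)*((n:ℝ)+1)) * ∫ x in (-(π/2))..(π/2), Real.cos x ^ n * Real.exp (-p*x) := by
  have key : ∫ x in (-(π/2))..(π/2),
      ((((n:ℝ)+2)^2 + p^2) * (Real.cos x ^ (n+2) * Real.exp (-p*x))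
        - (((n:ℝ)+2)*((n:ℝ)+1)) * (Real.cos x ^ n * Real.exp (-p*x))) = 0 := by
    have h := intervalIntegral.integral_eq_sub_of_hasDerivAt
      (f := fun x => Real.exp (-p*x) *
        (((n:ℝ)+2) * Real.cos x ^ (n+1) * Real.sin x - p * Real.cos x ^ (n+2)))
      (f' := fun x => (((n:ℝ)+2)^2 + p^2) * (Real.cos x ^ (n+2) * Real.exp (-p*x))
        - (((n:ℝ)+2)*((n:ℝ)+1)) * (Real.cos x ^ n * Real.exp (-p*x)))
      (a := -(π/2)) (b := π/2) ?_ ?_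
    · rw [h]
      simp [Real.cos_pi_div_two]
    · intro x hx
      have hx1 : HasDerivAt (fun x : ℝ => Real.exp (-p*x)) (Real.exp (-p*x) * (-p)) x := by
        have h0 : HasDerivAt (fun x : ℝ => -p*x) (-p) x := by
          simpa using (hasDerivAt_id x).const_mul (-p)
        exact h0.exp
      have hcos := Real.hasDerivAt_cos x
      have hsin := Real.hasDerivAt_sin x
      have hpow1 : HasDerivAt (fun x => Real.cos x ^ (n+1))
          (((n:ℝ)+1) * Real.cos x ^ n * (-Real.sin x)) x := by
        exact (hcos.pow (n+1)).congr_deriv (by simp)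
      have hpow2 : HasDerivAt (fun x => Real.cos x ^ (n+2))
          (((n:ℝ)+2) * Real.cos x ^ (n+1) * (-Real.sin x)) x := by
        exact (hcos.pow (n+2)).congr_deriv (by push_cast; simp)
      have hinner : HasDerivAt
          (fun x => ((n:ℝ)+2) * Real.cos x ^ (n+1) * Real.sin x - p * Real.cos x ^ (n+2))
          ((((n:ℝ)+2) * (((n:ℝ)+1) * Real.cos x ^ n * (-Real.sin x))) * Real.sin x
            + (((n:ℝ)+2) * Real.cos x ^ (n+1)) * Real.cos x
            - p * (((n:ℝ)+2) * Real.cos x ^ (n+1) * (-Real.sin x))) x := by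
        exact ((hpow1.const_mul (((n:ℝ)+2))).mul hsin).sub (hpow2.const_mul p)
      have := hx1.mul hinner
      refine this.congr_deriv ?_
      have hs : Real.sin x ^ 2 = 1 - Real.cos x ^ 2 := Real.sin_sq x
      linear_combination (-1:ℝ) * (Real.exp (-p*x) * (((n:ℝ)+2) * ((n:ℝ)+1) * Real.cos x ^ n)) * hs
    · apply Continuous.intervalIntegrable
      continuity
  have h1 := integrable_aux (n+2) p (-(π/2)) (π/2)
  have h2 := integrable_aux n p (-(π/2)) (π/2)
  rw [intervalIntegral.integral_sub (h1.const_mul _) (h2.const_mul _),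
    intervalIntegral.integral_const_mul, intervalIntegral.integral_const_mul] at key
  linarith

lemma base_case (p : ℝ) :
    ∫ x in (-(π/2))..(π/2), Real.cos x * Real.exp (-p*x)
    = 2 * Real.cosh (p * π / 2) / (p^2 + 1) := by
  have hd : (p^2 + 1 : ℝ) ≠ 0 := by positivity
  have h := intervalIntegral.integral_eq_sub_of_hasDerivAt
    (f := fun x => Real.exp (-p*x) * (Real.sin x - p * Real.cos x) / (p^2+1))
    (f' := fun x => Real.cos x * Real.exp (-p*x))
    (a := -(π/2)) (b := π/2) ?_ ?_
  · rw [h]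
    simp only [Real.cos_pi_div_two, Real.sin_pi_div_two, Real.cos_neg, Real.sin_neg]
    rw [Real.cosh_eq]
    field_simp
    ring
  · intro x hx
    have hx1 : HasDerivAt (fun x : ℝ => Real.exp (-p*x)) (Real.exp (-p*x) * (-p)) x := by
      have h0 : HasDerivAt (fun x : ℝ => -p*x) (-p) x := by
        simpa using (hasDerivAt_id x).const_mul (-p)
      exact h0.exp
    have hinner : HasDerivAt (fun x => Real.sin x - p * Real.cos x)
        (Real.cos x - p * (-Real.sin x)) x :=
      (Real.hasDerivAt_sin x).sub ((Real.hasDerivAt_cos x).const_mul p)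
    have := ((hx1.mul hinner).div_const (p^2+1))
    refine this.congr_deriv ?_
    field_simp
    ring
  · exact ((Real.continuous_cos.mul (by continuity))).intervalIntegrable _ _

theorem cos_pow_odd_exp_integral (m : ℕ) (p : ℝ) :
    ∫ x in (-(π/2))..(π/2), (Real.cos x) ^ (2*m+1) * Real.exp (-p * x) =
    (Nat.factorial (2*m+1) : ℝ) * 2 * Real.cosh (p * π / 2) /
      (∏ k ∈ Finset.range (m+1), (p^2 + ((2*k+1 : ℕ) : ℝ)^2)) := by
  induction m with
  | zero =>
    simp only [Nat.mul_zero, Nat.zero_add, pow_one, Finset.prod_range_one]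
    rw [base_case p]
    norm_num [Nat.factorial]
  | succ m ih =>
    have hprodpos : 0 < ∏ k ∈ Finset.range (m+1), (p^2 + ((2*k+1 : ℕ) : ℝ)^2) :=
      Finset.prod_pos (fun k _ => by positivity)
    have hdpos : (0:ℝ) < ((2*m+1:ℕ):ℝ)+2 := by positivity
    have hexp : 2*(m+1)+1 = (2*m+1)+2 := by ring
    rw [hexp]
    have hrec := rec_step (2*m+1) p
    rw [ih] at hrec
    have hd : ((((2*m+1:ℕ):ℝ))+2)^2 + p^2 ≠ 0 := by positivity
    have hIval : ∫ x in (-(π/2))..(π/2), Real.cos x ^ ((2*m+1)+2) * Real.exp (-p*x)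
        = ((((2*m+1:ℕ):ℝ)+2)*(((2*m+1:ℕ):ℝ)+1)) *
          ((Nat.factorial (2*m+1) : ℝ) * 2 * Real.cosh (p * π / 2) /
            (∏ k ∈ Finset.range (m+1), (p^2 + ((2*k+1 : ℕ) : ℝ)^2)))
          / (((((2*m+1:ℕ):ℝ))+2)^2 + p^2) := by
      field_simp at hrec ⊢
      linarith [hrec]
    rw [hIval, Finset.prod_range_succ (f := fun k => (p^2 + ((2*k+1:ℕ):ℝ)^2)) (n := m+1)]
    have hfact : (Nat.factorial ((2*m+1)+2) : ℝ)
        = (((2*m+1:ℕ):ℝ)+2)*(((2*m+1:ℕ):ℝ)+1) * (Nat.factorial (2*m+1) : ℝ) := by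
      rw [show (2*m+1)+2 = ((2*m+1)+1)+1 from rfl, Nat.factorial_succ, Nat.factorial_succ]
      push_cast
      ring
    rw [hfact]
    have hlast : (p^2 + ((2*(m+1)+1 : ℕ) : ℝ)^2) = ((((2*m+1:ℕ):ℝ))+2)^2 + p^2 := by
      push_cast; ring
    rw [hlast]
    have h1 : (∏ k ∈ Finset.range (m+1), (p^2 + ((2*k+1 : ℕ) : ℝ)^2)) ≠ 0 := ne_of_gt hprodpos
    field_simp
end

section
/- For a > 0, μ > 0, and α > 0 with α ≠ 1 and α(2+1/a) - 1 > 0, the Rényi information of order α of the inverse Gamma density f(x) = (a/(μ Γ(1+1/a))) (μ/(ax))^{2+1/a} exp(-μ/(ax)) on (0,∞) equals log(μ/a) + (1/(1-α)) [ (1 - (2+1/a)α) log α + log( Γ(α(2+1/a)-1) / Γ(1+1/a)^α ) ]. -/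
open Real MeasureTheory

lemma aux_renyi_int (b c s : ℝ) (hb : 0 < b) (hc : 0 < c) (hs : 1 < s) :
    ∫ x in Set.Ioi (0:ℝ), (b/x)^s * Real.exp (-(c/x)) =
      b^s * ((1/c)^(s-1) * Real.Gamma (s-1)) := by
  have key := MeasureTheory.integral_comp_rpow_Ioi
    (fun y => y^(-2:ℝ) * ((b*y)^s * Real.exp (-(c*y)))) (p := -1) (by norm_num)
  have L1 : ∫ x in Set.Ioi (0:ℝ), (b/x)^s * Real.exp (-(c/x)) =
      ∫ x in Set.Ioi (0:ℝ), (|(-1:ℝ)| * x^((-1:ℝ)-1)) •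
        ((x^(-1:ℝ))^(-2:ℝ) * ((b*(x^(-1:ℝ)))^s * Real.exp (-(c*(x^(-1:ℝ)))))) := by
    refine (setIntegral_congr_fun measurableSet_Ioi (fun x hx => ?_)).symm
    have hx0 : (0:ℝ) < x := hx
    have e1 : (-1:ℝ) - 1 = -2 := by norm_num
    rw [smul_eq_mul, e1, abs_neg, abs_one, one_mul, Real.rpow_neg_one]
    have e2 : (x⁻¹)^(-2:ℝ) = x^(2:ℝ) := by
      rw [Real.inv_rpow hx0.le, Real.rpow_neg hx0.le, inv_inv]
    have e3 : x^(-2:ℝ) * x^(2:ℝ) = 1 := by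
      rw [← Real.rpow_add hx0]; norm_num
    rw [e2, ← div_eq_mul_inv b x, ← div_eq_mul_inv c x, ← mul_assoc, e3, one_mul]
  have L2 : ∫ y in Set.Ioi (0:ℝ), y^(-2:ℝ) * ((b*y)^s * Real.exp (-(c*y))) =
      ∫ y in Set.Ioi (0:ℝ), b^s * (y^(s-1-1) * Real.exp (-(c*y))) := by
    refine setIntegral_congr_fun measurableSet_Ioi (fun y hy => ?_)
    have hy0 : (0:ℝ) < y := hy
    calc y^(-2:ℝ) * ((b*y)^s * Real.exp (-(c*y)))
        = b^s * ((y^(-2:ℝ) * y^s) * Real.exp (-(c*y))) := by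
          rw [Real.mul_rpow hb.le hy0.le]; ring
      _ = b^s * (y^(s-1-1) * Real.exp (-(c*y))) := by
          rw [← Real.rpow_add hy0, show (-2:ℝ)+s = s-1-1 by ring]
  rw [L1, key, L2, MeasureTheory.integral_const_mul,
    integral_rpow_mul_exp_neg_mul_Ioi (by linarith) hc]

theorem renyi_inverse_gamma (a μ α : ℝ) (ha : 0 < a) (hμ : 0 < μ)
    (hα : 0 < α) (hα1 : α ≠ 1) (h : 0 < α * (2 + 1/a) - 1) :
    (1 / (1 - α)) * Real.log (∫ x in Set.Ioi (0:ℝ),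
      ((a / (μ * Real.Gamma (1 + 1/a))) * (μ / (a * x)) ^ (2 + 1/a) *
        Real.exp (-μ / (a * x))) ^ α) =
    Real.log (μ / a) + (1 / (1 - α)) *
      ((1 - (2 + 1/a) * α) * Real.log α +
        Real.log (Real.Gamma (α * (2 + 1/a) - 1) / Real.Gamma (1 + 1/a) ^ α)) := by
  set G := Real.Gamma (1 + 1/a) with hGdef
  have hG : 0 < G := Real.Gamma_pos_of_pos (by positivity)
  set K := a / (μ * G) with hKdef
  have hK : 0 < K := by positivity
  set b := μ / a with hbdef
  have hb : 0 < b := by positivity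
  set s := α * (2 + 1/a) with hsdef
  have hs : 1 < s := by linarith
  have hc : 0 < α * b := by positivity
  have hΓ : 0 < Real.Gamma (s - 1) := Real.Gamma_pos_of_pos (by linarith)
  have hint : (∫ x in Set.Ioi (0:ℝ),
      (K * (μ / (a * x)) ^ (2 + 1/a) * Real.exp (-μ / (a * x))) ^ α) =
      K ^ α * (b ^ s * ((1/(α*b))^(s-1) * Real.Gamma (s-1))) := by
    have congr1 : ∀ x ∈ Set.Ioi (0:ℝ),
        (K * (μ / (a * x)) ^ (2 + 1/a) * Real.exp (-μ / (a * x))) ^ α =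
        K ^ α * ((b/x)^s * Real.exp (-((α*b)/x))) := by
      intro x hx
      have hx0 : (0:ℝ) < x := hx
      have hu : (0:ℝ) < μ / (a * x) := by positivity
      rw [Real.mul_rpow (by positivity) (Real.exp_pos _).le,
        Real.mul_rpow hK.le (Real.rpow_nonneg hu.le _),
        ← Real.rpow_mul hu.le, ← Real.exp_mul, mul_assoc]
      congr 2
      · rw [show μ / (a * x) = b / x by rw [hbdef]; field_simp,
          show (2 + 1/a) * α = s by rw [hsdef]; ring]
      · field_simp
        rw [hbdef]; field_simp
    rw [setIntegral_congr_fun measurableSet_Ioi congr1,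
      MeasureTheory.integral_const_mul, aux_renyi_int b (α*b) s hb hc hs]
  rw [hint]
  have hα0 : (1:ℝ) - α ≠ 0 := sub_ne_zero.mpr (Ne.symm hα1)
  have e1 : Real.log (K ^ α * (b ^ s * ((1/(α*b))^(s-1) * Real.Gamma (s-1)))) =
      α * Real.log K + (s * Real.log b +
        ((s-1) * (-(Real.log α + Real.log b)) + Real.log (Real.Gamma (s-1)))) := by
    rw [Real.log_mul (by positivity) (by positivity),
      Real.log_mul (by positivity) (by positivity),
      Real.log_mul (by positivity) hΓ.ne',
      Real.log_rpow hK, Real.log_rpow hb, Real.log_rpow (by positivity),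
      Real.log_div one_ne_zero hc.ne', Real.log_one, Real.log_mul hα.ne' hb.ne']
    ring
  have e2 : Real.log K = -(Real.log b + Real.log G) := by
    rw [hKdef, hbdef, Real.log_div ha.ne' (by positivity), Real.log_div hμ.ne' ha.ne',
      Real.log_mul hμ.ne' hG.ne']
    ring
  have e3 : Real.log (Real.Gamma (s - 1) / G ^ α) =
      Real.log (Real.Gamma (s-1)) - α * Real.log G := by
    rw [Real.log_div hΓ.ne' (by positivity), Real.log_rpow hG]
  rw [e1, e2, show α * (2 + 1/a) - 1 = s - 1 from rfl,
    show (1 - (2 + 1/a) * α) = 1 - s by rw [hsdef]; ring, e3]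
  field_simp
  ring
end

section
/- For a > 0, μ ≥ a, and α > 0 with α ≠ 1 such that α(μ/a - 1) + 1 > 0 and α(2 + 1/a) - 1 > 0, the Rényi information of order α of the density f(x) = (1+x)^{-(μ+1)/a - 1} x^{μ/a - 1} / B(μ/a, 1+1/a) on (0,∞) equals (1/(1-α)) [ -α log B(μ/a, 1+1/a) + log B(α(μ/a - 1)+1, α(2+1/a)-1) ]. -/
open Real MeasureTheory

/-- The Beta function. -/
noncomputable def betaFn (p q : ℝ) : ℝ := Real.Gamma p * Real.Gamma q / Real.Gamma (p + q)

/-!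
Raising the normalised density to the power `α` pulls out the factor `B(μ/a, 1 + 1/a)^(-α)` and
leaves `x^(p-1) (1+x)^(-(p+q))` with `p = α(μ/a - 1) + 1`, `q = α(2 + 1/a) - 1`. The substitution
`x = t/(1-t)` turns its integral over `(0, ∞)` into Euler's Beta integral `B(p, q)`.
-/

open Set

lemma betaFn_pos {p q : ℝ} (hp : 0 < p) (hq : 0 < q) : 0 < betaFn p q :=
  ProbabilityTheory.beta_pos hp hq

theorem integral_Ioo_rpow_mul_one_sub_rpow {p q : ℝ} (hp : 0 < p) (hq : 0 < q) :
    ∫ t in Ioo (0 : ℝ) 1, t ^ (p - 1) * (1 - t) ^ (q - 1) = betaFn p q := by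
  have hcast : Complex.betaIntegral p q
      = ((∫ t in (0 : ℝ)..1, t ^ (p - 1) * (1 - t) ^ (q - 1) : ℝ) : ℂ) := by
    rw [Complex.betaIntegral, ← intervalIntegral.integral_ofReal]
    refine intervalIntegral.integral_congr fun t ht => ?_
    rw [uIcc_of_le zero_le_one] at ht
    push_cast [Complex.ofReal_cpow ht.1, Complex.ofReal_cpow (sub_nonneg.2 ht.2)]
    rfl
  rw [show betaFn p q = ProbabilityTheory.beta p q from rfl,
    ProbabilityTheory.beta_eq_betaIntegralReal p q hp hq, hcast, Complex.ofReal_re,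
    intervalIntegral.integral_of_le zero_le_one, integral_Ioc_eq_integral_Ioo]

lemma image_div_one_sub_Ioo : (fun t : ℝ => t / (1 - t)) '' Ioo 0 1 = Ioi 0 := by
  ext y
  constructor
  · rintro ⟨t, ⟨ht0, ht1⟩, rfl⟩
    exact div_pos ht0 (sub_pos.2 ht1)
  · intro (hy : 0 < y)
    refine ⟨y / (1 + y), ⟨by positivity, (div_lt_one (by positivity)).2 (by linarith)⟩, ?_⟩
    field_simp
    ring

lemma injOn_div_one_sub : InjOn (fun t : ℝ => t / (1 - t)) (Ioo 0 1) := by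
  intro s hs t ht hst
  rw [div_eq_div_iff (sub_pos.2 hs.2).ne' (sub_pos.2 ht.2).ne'] at hst
  linarith

lemma hasDerivAt_div_one_sub {t : ℝ} (ht : t ≠ 1) :
    HasDerivAt (fun t : ℝ => t / (1 - t)) ((1 - t) ^ (-2 : ℝ)) t := by
  have h1t : 1 - t ≠ 0 := sub_ne_zero.2 (Ne.symm ht)
  refine ((hasDerivAt_id' t).div ((hasDerivAt_id' t).const_sub 1) h1t).congr_deriv ?_
  rw [rpow_neg_ofNat]
  field_simp
  ring

theorem integral_Ioi_rpow_mul_one_add_rpow {p q : ℝ} (hp : 0 < p) (hq : 0 < q) :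
    ∫ x in Ioi (0 : ℝ), x ^ (p - 1) * (1 + x) ^ (-(p + q)) = betaFn p q := by
  rw [← image_div_one_sub_Ioo, integral_image_eq_integral_abs_deriv_smul measurableSet_Ioo
    (fun t ht => (hasDerivAt_div_one_sub ht.2.ne).hasDerivWithinAt) injOn_div_one_sub,
    ← integral_Ioo_rpow_mul_one_sub_rpow hp hq]
  refine setIntegral_congr_fun measurableSet_Ioo fun t ⟨ht0, ht1⟩ => ?_
  have h1t : 0 < 1 - t := sub_pos.2 ht1
  have hinv : 1 + t / (1 - t) = (1 - t)⁻¹ := by field_simp; ring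
  simp only [smul_eq_mul, hinv]
  rw [abs_of_pos (rpow_pos_of_pos h1t _), div_rpow ht0.le h1t.le, inv_rpow h1t.le,
    ← rpow_neg h1t.le, neg_neg, div_eq_mul_inv, ← rpow_neg h1t.le]
  have hexp : (1 - t) ^ (-2 : ℝ) * (1 - t) ^ (-(p - 1)) * (1 - t) ^ (p + q) =
      (1 - t) ^ (q - 1) := by
    rw [← rpow_add h1t, ← rpow_add h1t]
    ring_nf
  linear_combination t ^ (p - 1) * hexp

theorem integral_rpow_div_const {X : Type*} [MeasurableSpace X] {μ : Measure X} {g : X → ℝ}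
    {c α : ℝ} (hg : ∀ᵐ x ∂μ, 0 ≤ g x) (hc : 0 < c) :
    ∫ x, (g x / c) ^ α ∂μ = c ^ (-α) * ∫ x, g x ^ α ∂μ := by
  rw [← integral_const_mul]
  refine integral_congr_ae (hg.mono fun x (hx : 0 ≤ g x) => ?_)
  dsimp only
  rw [div_rpow hx hc.le, rpow_neg hc.le, div_eq_inv_mul]

theorem renyi_scaled_F_general (a μ α : ℝ) (ha : 0 < a) (hμ : a ≤ μ)
    (h1 : 0 < α * (μ/a - 1) + 1) (h2 : 0 < α * (2 + 1/a) - 1) :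
    (1 / (1 - α)) * Real.log (∫ x in Set.Ioi (0:ℝ),
      ((1 + x) ^ (-(μ+1)/a - 1) * x ^ (μ/a - 1) / betaFn (μ/a) (1 + 1/a)) ^ α) =
    (1 / (1 - α)) * (-α * Real.log (betaFn (μ/a) (1 + 1/a))
      + Real.log (betaFn (α * (μ/a - 1) + 1) (α * (2 + 1/a) - 1))) := by
  have hB : 0 < betaFn (μ/a) (1 + 1/a) :=
    betaFn_pos (div_pos (ha.trans_le hμ) ha) (by positivity)
  have hpow : ∫ x in Ioi (0:ℝ), ((1 + x) ^ (-(μ+1)/a - 1) * x ^ (μ/a - 1)) ^ α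
      = betaFn (α * (μ/a - 1) + 1) (α * (2 + 1/a) - 1) := by
    rw [← integral_Ioi_rpow_mul_one_add_rpow h1 h2]
    refine setIntegral_congr_fun measurableSet_Ioi fun x (hx : 0 < x) => ?_
    have hx1 : 0 < 1 + x := by linarith
    rw [mul_rpow (by positivity) (by positivity), ← rpow_mul hx1.le, ← rpow_mul hx.le, mul_comm]
    congr 2 <;> field_simp <;> ring
  have hnonneg : ∀ᵐ x ∂(volume.restrict (Ioi (0:ℝ))),
      0 ≤ (1 + x) ^ (-(μ+1)/a - 1) * x ^ (μ/a - 1) :=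
    ae_restrict_of_forall_mem measurableSet_Ioi fun x (hx : 0 < x) => by
      have : 0 < 1 + x := by linarith
      positivity
  rw [integral_rpow_div_const hnonneg hB, hpow,
    log_mul (rpow_pos_of_pos hB _).ne' (betaFn_pos h1 h2).ne', log_rpow hB]

theorem renyi_scaled_F (a μ α : ℝ) (ha : 0 < a) (hμ : a ≤ μ)
    (hα : 0 < α) (hα1 : α ≠ 1)
    (h1 : 0 < α * (μ/a - 1) + 1) (h2 : 0 < α * (2 + 1/a) - 1) :
    (1 / (1 - α)) * Real.log (∫ x in Set.Ioi (0:ℝ),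
      ((1 + x) ^ (-(μ+1)/a - 1) * x ^ (μ/a - 1) / betaFn (μ/a) (1 + 1/a)) ^ α) =
    (1 / (1 - α)) * (-α * Real.log (betaFn (μ/a) (1 + 1/a))
      + Real.log (betaFn (α * (μ/a - 1) + 1) (α * (2 + 1/a) - 1))) :=
  renyi_scaled_F_general a μ α ha hμ h1 h2
end

section
/- Let γ > |β| ≥ 0, δ > 0, μ ∈ ℝ. Then ∫_{-∞}^{∞} exp( -γ√(δ² + (x-μ)²) + β(x-μ) ) dx = (2δγ/√(γ²-β²)) K₁(δ√(γ²-β²)), where K₁ is the modified Bessel function of the third kind of order 1. -/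
open Real MeasureTheory

/-- The modified Bessel function of the third kind of order 1. -/
noncomputable def besselK1 (x : ℝ) : ℝ :=
  (1/2) * ∫ u in Set.Ioi (0:ℝ), Real.exp (-(x/2) * (u + u⁻¹)) * u ^ (-2 : ℝ)

/-!
Write `γ = α cosh t`, `β = α sinh t` with `α = √(γ² - β²)` and substitute
`x = μ + δ sinh (s + t)`: the Jacobian is `δ cosh (s + t)` and the exponent becomes
`-δα cosh s`. Expanding `cosh (s + t)`, the odd part `sinh s · e^{-c cosh s}` integrates to zero,
leaving `δ cosh t ∫ cosh s e^{-c cosh s} ds`. Since `cosh s = e^{-s} + sinh s`, the same parity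
argument and the substitution `u = e^s` identify this last integral with `2 K₁(c)`.
-/

theorem integral_cosh_smul_comp_sinh {E : Type*} [NormedAddCommGroup E] [NormedSpace ℝ E]
    (f : ℝ → E) : ∫ s, cosh s • f (sinh s) = ∫ x, f x := by
  have := integral_image_eq_integral_abs_deriv_smul MeasurableSet.univ
    (fun s _ => (hasDerivAt_sinh s).hasDerivWithinAt) sinh_injective.injOn f
  simpa [sinh_surjective.range_eq, abs_of_pos (cosh_pos _)] using this.symm

theorem besselK1_eq_integral_exp_neg_mul_exp_neg_mul_cosh (c : ℝ) :
    besselK1 c = (1 / 2) * ∫ s, exp (-s) * exp (-(c * cosh s)) := by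
  have := integral_image_eq_integral_abs_deriv_smul MeasurableSet.univ
    (fun s _ => (hasDerivAt_exp s).hasDerivWithinAt) exp_injective.injOn
    (fun u => exp (-(c / 2) * (u + u⁻¹)) * u ^ (-2 : ℝ))
  rw [Set.image_univ, range_exp, Measure.restrict_univ] at this
  rw [besselK1, this]
  congr 1
  refine integral_congr_ae (Filter.Eventually.of_forall fun s => ?_)
  dsimp only
  rw [abs_of_pos (exp_pos s), smul_eq_mul, ← exp_neg, ← exp_mul, cosh_eq]
  simp only [← exp_add]
  ring_nf

theorem sq_le_sinh_sq (x : ℝ) : x ^ 2 ≤ sinh x ^ 2 := by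
  rw [← sq_abs, ← sq_abs (sinh x), abs_sinh]
  exact pow_le_pow_left₀ (abs_nonneg x) (self_le_sinh_iff.mpr (abs_nonneg x)) 2

theorem integrable_cosh_mul_exp_neg_mul_cosh {c : ℝ} (hc : 0 < c) :
    Integrable fun s => cosh s * exp (-(c * cosh s)) := by
  -- `exp y ≥ y ^ 3 / 6` and `cosh s ^ 2 ≥ 1 + s ^ 2` give the bound `(6 / c ^ 3) * (1 + s ^ 2)⁻¹`
  refine (integrable_inv_one_add_sq.const_mul (6 / c ^ 3)).mono' (by fun_prop)
    (Filter.Eventually.of_forall fun s => ?_)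
  have hcosh := cosh_pos s
  have hexp : (c * cosh s) ^ 3 / 6 ≤ exp (c * cosh s) := by
    simpa [Nat.factorial] using pow_div_factorial_le_exp (x := c * cosh s) (by positivity) 3
  have hsq : 1 + s ^ 2 ≤ cosh s ^ 2 := by
    rw [cosh_sq']; linarith [sq_le_sinh_sq s]
  rw [Real.norm_of_nonneg (by positivity), exp_neg, ← div_eq_mul_inv, div_le_iff₀ (exp_pos _)]
  calc cosh s ≤ cosh s * (cosh s ^ 2 / (1 + s ^ 2)) :=
        le_mul_of_one_le_right hcosh.le ((one_le_div (by positivity)).mpr hsq)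
    _ = 6 / c ^ 3 * (1 + s ^ 2)⁻¹ * ((c * cosh s) ^ 3 / 6) := by field_simp
    _ ≤ 6 / c ^ 3 * (1 + s ^ 2)⁻¹ * exp (c * cosh s) := by gcongr

theorem integrable_sinh_mul_exp_neg_mul_cosh {c : ℝ} (hc : 0 < c) :
    Integrable fun s => sinh s * exp (-(c * cosh s)) := by
  refine (integrable_cosh_mul_exp_neg_mul_cosh hc).mono' (by fun_prop)
    (Filter.Eventually.of_forall fun s => ?_)
  rw [norm_mul, Real.norm_of_nonneg (exp_pos _).le, Real.norm_eq_abs, abs_sinh, ← cosh_abs]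
  gcongr
  exact (sinh_lt_cosh _).le

theorem integral_sinh_mul_exp_neg_mul_cosh (c : ℝ) :
    ∫ s, sinh s * exp (-(c * cosh s)) = 0 := by
  have h := integral_neg_eq_self (fun s => sinh s * exp (-(c * cosh s))) volume
  simp only [sinh_neg, cosh_neg, neg_mul, integral_neg] at h
  linarith

theorem integral_cosh_mul_exp_neg_mul_cosh {c : ℝ} (hc : 0 < c) :
    ∫ s, cosh s * exp (-(c * cosh s)) = 2 * besselK1 c := by
  have h := integral_sub (integrable_cosh_mul_exp_neg_mul_cosh hc)
    (integrable_sinh_mul_exp_neg_mul_cosh hc)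
  simp only [← sub_mul, cosh_sub_sinh, integral_sinh_mul_exp_neg_mul_cosh, sub_zero] at h
  rw [← h, besselK1_eq_integral_exp_neg_mul_exp_neg_mul_cosh]
  ring

theorem integral_cosh_add_mul_exp_neg_mul_cosh {c : ℝ} (hc : 0 < c) (t : ℝ) :
    ∫ s, cosh (s + t) * exp (-(c * cosh s)) = cosh t * ∫ s, cosh s * exp (-(c * cosh s)) := by
  have h : ∀ s, cosh (s + t) * exp (-(c * cosh s)) =
      cosh t * (cosh s * exp (-(c * cosh s))) + sinh t * (sinh s * exp (-(c * cosh s))) := by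
    intro s; rw [cosh_add]; ring
  simp_rw [h]
  rw [integral_add ((integrable_cosh_mul_exp_neg_mul_cosh hc).const_mul _)
    ((integrable_sinh_mul_exp_neg_mul_cosh hc).const_mul _), integral_const_mul,
    integral_const_mul, integral_sinh_mul_exp_neg_mul_cosh, mul_zero, add_zero]

theorem exists_eq_mul_cosh_and_eq_mul_sinh {γ β : ℝ} (h : |β| < γ) :
    ∃ t, γ = √(γ ^ 2 - β ^ 2) * cosh t ∧ β = √(γ ^ 2 - β ^ 2) * sinh t := by
  have hγ : 0 < γ := (abs_nonneg β).trans_lt h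
  have hsq : β ^ 2 < γ ^ 2 := sq_lt_sq' (abs_lt.mp h).1 (abs_lt.mp h).2
  set α := √(γ ^ 2 - β ^ 2)
  have hα : 0 < α := sqrt_pos.mpr (by linarith)
  have hα2 : α ^ 2 = γ ^ 2 - β ^ 2 := sq_sqrt (by linarith)
  refine ⟨arsinh (β / α), ?_, by rw [sinh_arsinh]; field_simp⟩
  rw [cosh_arsinh, show 1 + (β / α) ^ 2 = (γ / α) ^ 2 by field_simp; linarith,
    sqrt_sq (by positivity)]
  field_simp

theorem hyperbolic_normalization (γ β δ μ : ℝ) (hβ : |β| < γ) (hδ : 0 < δ) :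
    ∫ x : ℝ, Real.exp (-γ * Real.sqrt (δ^2 + (x - μ)^2) + β * (x - μ)) =
    (2 * δ * γ / Real.sqrt (γ^2 - β^2)) *
      besselK1 (δ * Real.sqrt (γ^2 - β^2)) := by
  obtain ⟨t, hγt, hβt⟩ := exists_eq_mul_cosh_and_eq_mul_sinh hβ
  have hα : 0 < √(γ ^ 2 - β ^ 2) := sqrt_pos.mpr (by nlinarith [abs_nonneg β, sq_abs β])
  set α := √(γ ^ 2 - β ^ 2)
  clear_value α
  subst hγt hβt
  set g : ℝ → ℝ := fun x => exp (-(α * cosh t) * √(δ ^ 2 + x ^ 2) + α * sinh t * x)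
  have hg : ∀ s, g (δ * sinh (s + t)) = exp (-(δ * α * cosh s)) := by
    intro s
    have : √(δ ^ 2 + (δ * sinh (s + t)) ^ 2) = δ * cosh (s + t) := by
      rw [mul_pow, ← mul_one_add, ← cosh_sq', ← mul_pow, sqrt_sq (by positivity)]
    simp only [g, this]
    rw [show cosh s = cosh (s + t - t) by rw [add_sub_cancel_right], cosh_sub]
    ring_nf
  calc ∫ x, exp (-(α * cosh t) * √(δ ^ 2 + (x - μ) ^ 2) + α * sinh t * (x - μ))
      = ∫ x, g x := integral_sub_right_eq_self g μ
    _ = δ * ∫ x, g (δ * x) := by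
      rw [Measure.integral_comp_mul_left, abs_inv, abs_of_pos hδ, smul_eq_mul,
        mul_inv_cancel_left₀ hδ.ne']
    _ = δ * ∫ s, cosh (s + t) * g (δ * sinh (s + t)) := by
      rw [← integral_cosh_smul_comp_sinh, ← integral_add_right_eq_self _ t]; rfl
    _ = δ * (cosh t * (2 * besselK1 (δ * α))) := by
      simp_rw [hg, integral_cosh_add_mul_exp_neg_mul_cosh (mul_pos hδ hα),
        integral_cosh_mul_exp_neg_mul_cosh (mul_pos hδ hα)]
    _ = _ := by field_simp
end

section
/- Let γ > |β| ≥ 0, δ > 0, μ ∈ ℝ, and let f(x) = (√(γ²-β²)/(2γδ K₁(δ√(γ²-β²)))) exp(-γ√(δ²+(x-μ)²) + β(x-μ)) be the hyperbolic density. Then for α > 0, ∫_{ℝ} f(x)^α dx = (√(γ²-β²)/(2γδ))^{α-1} K₁(αδ√(γ²-β²)) / K₁(δ√(γ²-β²))^α, and hence for α ≠ 1 the Rényi information equals -log(√(γ²-β²)/(2γδ)) + (1/(1-α)) log( K₁(αδ√(γ²-β²)) / K₁(δ√(γ²-β²))^α ). -/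
/-!
The substitution `y = s ((γ + β) u - (γ - β) u⁻¹)` with `s = δ / (2 √(γ² - β²))` maps `(0, ∞)`
increasingly onto `ℝ`, and turns `exp (-γ √(δ² + y²) + β y) dy` into
`s ((γ + β) + (γ - β) u⁻²) exp (-(δ √(γ² - β²) / 2) (u + u⁻¹)) du`. The inversion `u ↦ u⁻¹` shows
that `∫ exp (-c (u + u⁻¹)) du` and `∫ exp (-c (u + u⁻¹)) u⁻² du` over `(0, ∞)` both equal
`2 K₁(2c)`, so the unnormalised density integrates to `2 γ δ K₁(δ √(γ² - β²)) / √(γ² - β²)`.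
Raising the density to the power `α` only replaces `(γ, β)` by `(α γ, α β)`, which gives `∫ f ^ α`;
the Rényi information is then a matter of taking logarithms.
-/

open Real MeasureTheory

open Set

lemma setIntegral_Ioi_rpow_neg_two_mul_comp_inv (g : ℝ → ℝ) :
    ∫ u in Ioi 0, u ^ (-2 : ℝ) * g u⁻¹ = ∫ u in Ioi 0, g u := by
  simpa [rpow_neg_one, show (-1 : ℝ) - 1 = -2 by norm_num] using
    integral_comp_rpow_Ioi g (p := -1) (by norm_num)

lemma integrableOn_Ioi_rpow_neg_two_mul_comp_inv_iff (g : ℝ → ℝ) :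
    IntegrableOn (fun u => u ^ (-2 : ℝ) * g u⁻¹) (Ioi 0) ↔ IntegrableOn g (Ioi 0) := by
  simpa [rpow_neg_one, show (-1 : ℝ) - 1 = -2 by norm_num] using
    integrableOn_Ioi_comp_rpow_iff g (p := -1) (by norm_num)

lemma integrableOn_exp_neg_mul_add_inv {c : ℝ} (hc : 0 < c) :
    IntegrableOn (fun u : ℝ => exp (-c * (u + u⁻¹))) (Ioi 0) := by
  refine (exp_neg_integrableOn_Ioi 0 hc).mono' (by fun_prop : Measurable _).aestronglyMeasurable ?_
  filter_upwards [ae_restrict_mem measurableSet_Ioi] with u (hu : 0 < u)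
  rw [norm_of_nonneg (exp_pos _).le, exp_le_exp]
  nlinarith [inv_pos.2 hu]

lemma integral_exp_neg_mul_add_inv_mul_rpow_neg_two (c : ℝ) :
    ∫ u in Ioi 0, exp (-c * (u + u⁻¹)) * u ^ (-2 : ℝ) = ∫ u in Ioi 0, exp (-c * (u + u⁻¹)) := by
  simpa [mul_comm, add_comm] using
    setIntegral_Ioi_rpow_neg_two_mul_comp_inv (fun u => exp (-c * (u + u⁻¹)))

lemma integrableOn_exp_neg_mul_add_inv_mul_rpow_neg_two {c : ℝ} (hc : 0 < c) :
    IntegrableOn (fun u : ℝ => exp (-c * (u + u⁻¹)) * u ^ (-2 : ℝ)) (Ioi 0) := by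
  simpa [mul_comm, add_comm] using (integrableOn_Ioi_rpow_neg_two_mul_comp_inv_iff
    (fun u => exp (-c * (u + u⁻¹)))).2 (integrableOn_exp_neg_mul_add_inv hc)

lemma besselK1_eq_half_integral (x : ℝ) :
    besselK1 x = (1 / 2) * ∫ u in Ioi 0, exp (-(x / 2) * (u + u⁻¹)) := by
  rw [besselK1, integral_exp_neg_mul_add_inv_mul_rpow_neg_two]

lemma besselK1_pos {x : ℝ} (hx : 0 < x) : 0 < besselK1 x := by
  have : NeZero (volume.restrict (Ioi (0 : ℝ))) := ⟨by simp⟩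
  rw [besselK1_eq_half_integral]
  exact mul_pos one_half_pos (integral_exp_pos (integrableOn_exp_neg_mul_add_inv (half_pos hx)))

section Substitution

variable {s p q : ℝ}

lemma image_mul_sub_inv_Ioi (hs : 0 < s) (hp : 0 < p) (hq : 0 < q) :
    (fun u => s * (p * u - q * u⁻¹)) '' Ioi 0 = univ := by
  refine eq_univ_of_forall fun y => ?_
  -- the positive root of `s p u² - y u - s q = 0`
  set w := y + √(y ^ 2 + 4 * s ^ 2 * p * q)
  have hsq : √(y ^ 2 + 4 * s ^ 2 * p * q) ^ 2 = y ^ 2 + 4 * s ^ 2 * p * q :=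
    sq_sqrt (by positivity)
  have hw : 0 < w := by
    have : |y| < √(y ^ 2 + 4 * s ^ 2 * p * q) := by
      rw [← sqrt_sq_eq_abs]
      exact sqrt_lt_sqrt (sq_nonneg y) (lt_add_of_pos_right _ (by positivity))
    linarith [neg_abs_le y]
  refine ⟨w / (2 * s * p), mem_Ioi.2 (by positivity), ?_⟩
  field_simp
  linear_combination hsq

lemma strictMonoOn_mul_sub_inv (hs : 0 < s) (hp : 0 < p) (hq : 0 < q) :
    StrictMonoOn (fun u => s * (p * u - q * u⁻¹)) (Ioi 0) := by
  intro u (hu : 0 < u) v (hv : 0 < v) huv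
  have : v⁻¹ < u⁻¹ := inv_strictAntiOn hu hv huv
  dsimp only
  gcongr

lemma hasDerivAt_mul_sub_inv {u : ℝ} (hu : u ≠ 0) :
    HasDerivAt (fun u => s * (p * u - q * u⁻¹)) (s * (p + q * (u ^ 2)⁻¹)) u :=
  ((((hasDerivAt_id' u).const_mul p).sub ((hasDerivAt_inv hu).const_mul q)).const_mul
    s).congr_deriv (by ring)

theorem integral_eq_setIntegral_Ioi_comp_mul_sub_inv (f : ℝ → ℝ) (hs : 0 < s) (hp : 0 < p)
    (hq : 0 < q) :
    ∫ y, f y = ∫ u in Ioi 0, s * (p + q * (u ^ 2)⁻¹) * f (s * (p * u - q * u⁻¹)) := by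
  have := integral_image_eq_integral_abs_deriv_smul measurableSet_Ioi
    (fun u (hu : 0 < u) => (hasDerivAt_mul_sub_inv (s := s) (p := p) (q := q)
      hu.ne').hasDerivWithinAt)
    (strictMonoOn_mul_sub_inv hs hp hq).injOn f
  rw [image_mul_sub_inv_Ioi hs hp hq, Measure.restrict_univ] at this
  rw [this]
  refine setIntegral_congr_fun measurableSet_Ioi fun u (hu : 0 < u) => ?_
  rw [smul_eq_mul, abs_of_pos (by positivity)]

end Substitution

lemma hyperbolic_exponent_comp_mul_sub_inv {a b δ r u : ℝ} (hab : |b| < a) (hδ : 0 ≤ δ)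
    (hr : 0 < r) (hr2 : r ^ 2 = a ^ 2 - b ^ 2) (hu : 0 < u) :
    -a * √(δ ^ 2 + (δ / (2 * r) * ((a + b) * u - (a - b) * u⁻¹)) ^ 2)
        + b * (δ / (2 * r) * ((a + b) * u - (a - b) * u⁻¹))
      = -(δ * r / 2) * (u + u⁻¹) := by
  obtain ⟨hb₁, hb₂⟩ := abs_lt.1 hab
  have hpos : 0 < (a + b) * u + (a - b) * u⁻¹ := by
    have := inv_pos.2 hu
    nlinarith
  have hsq : δ ^ 2 + (δ / (2 * r) * ((a + b) * u - (a - b) * u⁻¹)) ^ 2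
      = (δ / (2 * r) * ((a + b) * u + (a - b) * u⁻¹)) ^ 2 := by
    field_simp
    linear_combination (4 * δ ^ 2 * u ^ 2) * hr2
  rw [hsq, sqrt_sq (mul_nonneg (by positivity) hpos.le)]
  field_simp
  linear_combination (δ * (1 + u ^ 2)) * hr2

theorem integral_exp_neg_mul_sqrt_add_mul {a b δ : ℝ} (hab : |b| < a) (hδ : 0 < δ) :
    ∫ y, exp (-a * √(δ ^ 2 + y ^ 2) + b * y)
      = 2 * a * δ / √(a ^ 2 - b ^ 2) * besselK1 (δ * √(a ^ 2 - b ^ 2)) := by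
  obtain ⟨hb₁, hb₂⟩ := abs_lt.1 hab
  set r := √(a ^ 2 - b ^ 2)
  have hr : 0 < r := sqrt_pos.2 (by nlinarith)
  have hr2 : r ^ 2 = a ^ 2 - b ^ 2 := sq_sqrt (by nlinarith)
  set E : ℝ → ℝ := fun u => exp (-(δ * r / 2) * (u + u⁻¹))
  have hc : 0 < δ * r / 2 := by positivity
  rw [integral_eq_setIntegral_Ioi_comp_mul_sub_inv _ (by positivity : 0 < δ / (2 * r))
    (by linarith : 0 < a + b) (by linarith : 0 < a - b)]
  have hsplit : ∀ u ∈ Ioi (0 : ℝ),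
      δ / (2 * r) * (a + b + (a - b) * (u ^ 2)⁻¹)
          * exp (-a * √(δ ^ 2 + (δ / (2 * r) * ((a + b) * u - (a - b) * u⁻¹)) ^ 2)
            + b * (δ / (2 * r) * ((a + b) * u - (a - b) * u⁻¹)))
        = δ / (2 * r) * (a + b) * E u + δ / (2 * r) * (a - b) * (E u * u ^ (-2 : ℝ)) := by
    intro u (hu : 0 < u)
    rw [hyperbolic_exponent_comp_mul_sub_inv hab hδ.le hr hr2 hu, rpow_neg hu.le, rpow_two]
    ring
  rw [setIntegral_congr_fun measurableSet_Ioi hsplit,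
    integral_add ((integrableOn_exp_neg_mul_add_inv hc).const_mul _)
      ((integrableOn_exp_neg_mul_add_inv_mul_rpow_neg_two hc).const_mul _),
    integral_const_mul, integral_const_mul, integral_exp_neg_mul_add_inv_mul_rpow_neg_two,
    besselK1_eq_half_integral]
  field_simp
  ring

noncomputable def hyperbolicDensity (γ β δ μ x : ℝ) : ℝ :=
  √(γ ^ 2 - β ^ 2) / (2 * γ * δ * besselK1 (δ * √(γ ^ 2 - β ^ 2))) *
    exp (-γ * √(δ ^ 2 + (x - μ) ^ 2) + β * (x - μ))

theorem integral_hyperbolicDensity_rpow {γ β δ α : ℝ} (μ : ℝ) (hβ : |β| < γ) (hδ : 0 < δ)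
    (hα : 0 < α) :
    ∫ x, hyperbolicDensity γ β δ μ x ^ α
      = (√(γ ^ 2 - β ^ 2) / (2 * γ * δ)) ^ (α - 1) * besselK1 (α * δ * √(γ ^ 2 - β ^ 2))
        / besselK1 (δ * √(γ ^ 2 - β ^ 2)) ^ α := by
  have hγ : 0 < γ := (abs_nonneg β).trans_lt hβ
  set r := √(γ ^ 2 - β ^ 2)
  have hr : 0 < r := sqrt_pos.2 (by nlinarith [abs_lt.1 hβ])
  set K := besselK1 (δ * r)
  have hK : 0 < K := besselK1_pos (by positivity)
  have hpow : ∀ x, hyperbolicDensity γ β δ μ x ^ α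
      = (r / (2 * γ * δ * K)) ^ α * exp (-(α * γ) * √(δ ^ 2 + (x - μ) ^ 2) + α * β * (x - μ)) := by
    intro x
    change (r / (2 * γ * δ * K) * exp (-γ * √(δ ^ 2 + (x - μ) ^ 2) + β * (x - μ))) ^ α = _
    rw [mul_rpow (by positivity) (exp_pos _).le, ← exp_mul]
    ring_nf
  have hαβ : |α * β| < α * γ := by
    rwa [abs_mul, abs_of_pos hα, mul_lt_mul_iff_right₀ hα]
  have hsqrt : √((α * γ) ^ 2 - (α * β) ^ 2) = α * r := by
    rw [show (α * γ) ^ 2 - (α * β) ^ 2 = α ^ 2 * (γ ^ 2 - β ^ 2) by ring,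
      sqrt_mul (sq_nonneg α), sqrt_sq hα.le]
  simp_rw [hpow]
  rw [integral_const_mul, integral_sub_right_eq_self
      (fun y => exp (-(α * γ) * √(δ ^ 2 + y ^ 2) + α * β * y)) μ,
    integral_exp_neg_mul_sqrt_add_mul hαβ hδ, hsqrt, div_rpow hr.le (by positivity),
    rpow_sub_one (by positivity), div_rpow hr.le (by positivity), mul_rpow (by positivity) hK.le,
    show δ * (α * r) = α * δ * r by ring]
  field_simp

theorem renyi_hyperbolic (γ β δ μ : ℝ) (hβ : |β| < γ) (hδ : 0 < δ) :
    ∀ α : ℝ, 0 < α →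
      ((∫ x : ℝ,
        ((Real.sqrt (γ^2 - β^2) / (2 * γ * δ * besselK1 (δ * Real.sqrt (γ^2 - β^2)))) *
          Real.exp (-γ * Real.sqrt (δ^2 + (x - μ)^2) + β * (x - μ))) ^ α) =
        (Real.sqrt (γ^2 - β^2) / (2 * γ * δ)) ^ (α - 1) *
          besselK1 (α * δ * Real.sqrt (γ^2 - β^2)) /
            besselK1 (δ * Real.sqrt (γ^2 - β^2)) ^ α)
      ∧ (α ≠ 1 →
        (1 / (1 - α)) * Real.log (∫ x : ℝ,
          ((Real.sqrt (γ^2 - β^2) / (2 * γ * δ * besselK1 (δ * Real.sqrt (γ^2 - β^2)))) *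
            Real.exp (-γ * Real.sqrt (δ^2 + (x - μ)^2) + β * (x - μ))) ^ α) =
        -Real.log (Real.sqrt (γ^2 - β^2) / (2 * γ * δ)) +
          (1 / (1 - α)) * Real.log
            (besselK1 (α * δ * Real.sqrt (γ^2 - β^2)) /
              besselK1 (δ * Real.sqrt (γ^2 - β^2)) ^ α)) := by
  intro α hα
  have hγ : 0 < γ := (abs_nonneg β).trans_lt hβ
  have hr : 0 < √(γ ^ 2 - β ^ 2) := sqrt_pos.2 (by nlinarith [abs_lt.1 hβ])
  have hK : 0 < besselK1 (δ * √(γ ^ 2 - β ^ 2)) := besselK1_pos (by positivity)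
  have hKα : 0 < besselK1 (α * δ * √(γ ^ 2 - β ^ 2)) := besselK1_pos (by positivity)
  have hint := integral_hyperbolicDensity_rpow μ hβ hδ hα
  simp only [hyperbolicDensity] at hint
  refine ⟨hint, fun hα₁ => ?_⟩
  rw [hint, mul_div_assoc, log_mul (by positivity) (by positivity), log_rpow (by positivity)]
  field_simp [sub_ne_zero.2 hα₁.symm]
  ring
end

section
/- Let γ, β > 0 and α > 0 with α(γ+1/2) - 1/2 > 0 and α(β+1/2) - 1/2 > 0, α ≠ 1. For the skew Student's t density f(x) = (1 + x/√(γ+β+x²))^{γ+1/2} (1 - x/√(γ+β+x²))^{β+1/2} / (B(γ,β) √(γ+β) 2^{γ+β-1}) on ℝ, one has ∫_ℝ f(x)^α dx = 4^{α-1} B(α(γ+1/2)-1/2, α(β+1/2)-1/2) / ((√(β+γ))^{α-1} B(γ,β)^α), and hence R_α(f) = (1/(1-α)) log[ 4^{α-1} B(α(γ+1/2)-1/2, α(β+1/2)-1/2) / ((√(β+γ))^{α-1} B(γ,β)^α) ]. -/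
/-!
The substitution `y = x / √(c + x²)`, `c = γ + β`, is a diffeomorphism of `ℝ` onto `(-1, 1)` with
inverse `x = √c y / √(1 - y²)`, so `dx = √c (1 - y²)^(-3/2) dy`. As `1 - y² = (1 + y)(1 - y)`, the
`α`-th power of the density becomes a constant multiple of `(1 + y)^(p - 1) (1 - y)^(q - 1)` with
`p = α(γ + 1/2) - 1/2` and `q = α(β + 1/2) - 1/2`, and the integral of the latter over `(-1, 1)`
is the shifted Beta integral `2^(p + q - 1) B(p, q)`.
-/

open Real MeasureTheory

open Set

theorem integral_rpow_mul_sub_rpow_eq_betaFn {p q a : ℝ} (hp : 0 < p) (hq : 0 < q)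
    (ha : 0 < a) :
    ∫ x in (0 : ℝ)..a, x ^ (p - 1) * (a - x) ^ (q - 1) = a ^ (p + q - 1) * betaFn p q := by
  apply Complex.ofReal_injective
  calc ((∫ x in (0 : ℝ)..a, x ^ (p - 1) * (a - x) ^ (q - 1) : ℝ) : ℂ)
      = ∫ x in (0 : ℝ)..a, (x : ℂ) ^ ((p : ℂ) - 1) * ((a : ℂ) - x) ^ ((q : ℂ) - 1) := by
        rw [← intervalIntegral.integral_ofReal]
        refine intervalIntegral.integral_congr fun x hx => ?_
        rw [uIcc_of_le ha.le] at hx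
        push_cast [Complex.ofReal_cpow hx.1, Complex.ofReal_cpow (sub_nonneg.2 hx.2)]
        rfl
    _ = (a : ℂ) ^ ((p : ℂ) + q - 1) * Complex.betaIntegral p q :=
        Complex.betaIntegral_scaled _ _ ha
    _ = _ := by
        rw [Complex.betaIntegral_eq_Gamma_mul_div _ _ (by simpa) (by simpa), betaFn,
          ← Complex.ofReal_add, Complex.Gamma_ofReal, Complex.Gamma_ofReal,
          Complex.Gamma_ofReal]
        push_cast [Complex.ofReal_cpow ha.le]
        rfl

theorem integral_Ioo_one_add_rpow_mul_one_sub_rpow {p q : ℝ} (hp : 0 < p) (hq : 0 < q) :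
    ∫ y in Ioo (-1 : ℝ) 1, (1 + y) ^ (p - 1) * (1 - y) ^ (q - 1) =
      2 ^ (p + q - 1) * betaFn p q := by
  rw [← integral_Ioc_eq_integral_Ioo, ← intervalIntegral.integral_of_le (by norm_num),
    ← integral_rpow_mul_sub_rpow_eq_betaFn hp hq two_pos]
  have hshift := intervalIntegral.integral_comp_sub_right
    (fun y : ℝ => (1 + y) ^ (p - 1) * (1 - y) ^ (q - 1)) (a := 0) (b := 2) 1
  norm_num at hshift
  rw [← hshift]
  refine intervalIntegral.integral_congr fun x _ => ?_
  ring_nf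

noncomputable def divSqrtOneSubSq (c y : ℝ) : ℝ := √c * y / √(1 - y ^ 2)

theorem one_sub_sq_div_sqrt_add_sq {c : ℝ} (hc : 0 < c) (x : ℝ) :
    1 - (x / √(c + x ^ 2)) ^ 2 = c / (c + x ^ 2) := by
  have : 0 < c + x ^ 2 := by positivity
  rw [div_pow, sq_sqrt this.le]
  field_simp
  ring

theorem div_sqrt_add_sq_mem_Ioo {c : ℝ} (hc : 0 < c) (x : ℝ) :
    x / √(c + x ^ 2) ∈ Ioo (-1 : ℝ) 1 := by
  have h := one_sub_sq_div_sqrt_add_sq hc x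
  have : 0 < c / (c + x ^ 2) := by positivity
  exact abs_lt.mp (sq_lt_one_iff_abs_lt_one _ |>.mp (by linarith))

theorem divSqrtOneSubSq_div_sqrt_add_sq {c : ℝ} (hc : 0 < c) (x : ℝ) :
    divSqrtOneSubSq c (x / √(c + x ^ 2)) = x := by
  have : 0 < c + x ^ 2 := by positivity
  rw [divSqrtOneSubSq, one_sub_sq_div_sqrt_add_sq hc, sqrt_div hc.le]
  field_simp

theorem add_sq_divSqrtOneSubSq {c y : ℝ} (hc : 0 ≤ c) (hy : y ^ 2 < 1) :
    c + divSqrtOneSubSq c y ^ 2 = c / (1 - y ^ 2) := by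
  have : 0 < 1 - y ^ 2 := by linarith
  rw [divSqrtOneSubSq, div_pow, mul_pow, sq_sqrt hc, sq_sqrt this.le]
  field_simp
  ring

theorem div_sqrt_add_sq_divSqrtOneSubSq {c y : ℝ} (hc : 0 < c) (hy : y ^ 2 < 1) :
    divSqrtOneSubSq c y / √(c + divSqrtOneSubSq c y ^ 2) = y := by
  have : 0 < 1 - y ^ 2 := by linarith
  rw [add_sq_divSqrtOneSubSq hc.le hy, sqrt_div hc.le, divSqrtOneSubSq]
  field_simp

theorem hasDerivAt_divSqrtOneSubSq (c : ℝ) {y : ℝ} (hy : y ^ 2 < 1) :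
    HasDerivAt (divSqrtOneSubSq c) (√c * (1 - y ^ 2) ^ (-(3 / 2) : ℝ)) y := by
  have h : 0 < 1 - y ^ 2 := by linarith
  have hs : 0 < √(1 - y ^ 2) := sqrt_pos.mpr h
  have hroot : HasDerivAt (fun y : ℝ => √(1 - y ^ 2)) (-y / √(1 - y ^ 2)) y := by
    convert ((hasDerivAt_pow 2 y).const_sub 1).sqrt h.ne' using 1
    field_simp
    ring
  have hpow : (1 - y ^ 2) ^ (-(3 / 2) : ℝ) = (√(1 - y ^ 2) ^ 3)⁻¹ := by
    rw [sqrt_eq_rpow, ← rpow_mul_natCast h.le, ← rpow_neg h.le]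
    norm_num
  show HasDerivAt (fun y => √c * y / √(1 - y ^ 2)) _ y
  refine (((hasDerivAt_id' y).const_mul √c).div hroot hs.ne').congr_deriv ?_
  rw [hpow]
  field_simp
  rw [sq_sqrt h.le]
  ring

theorem integral_comp_div_sqrt_add_sq {c : ℝ} (hc : 0 < c) (G : ℝ → ℝ) :
    ∫ x, G (x / √(c + x ^ 2)) =
      ∫ y in Ioo (-1 : ℝ) 1, √c * (1 - y ^ 2) ^ (-(3 / 2) : ℝ) * G y := by
  have hsq : ∀ y ∈ Ioo (-1 : ℝ) 1, y ^ 2 < 1 := fun y hy =>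
    sq_lt_one_iff_abs_lt_one _ |>.mpr (abs_lt.mpr hy)
  have himage : divSqrtOneSubSq c '' Ioo (-1) 1 = univ :=
    eq_univ_of_forall fun x =>
      ⟨_, div_sqrt_add_sq_mem_Ioo hc x, divSqrtOneSubSq_div_sqrt_add_sq hc x⟩
  have hinj : InjOn (divSqrtOneSubSq c) (Ioo (-1) 1) := fun y hy z hz h => by
    rw [← div_sqrt_add_sq_divSqrtOneSubSq hc (hsq y hy), h,
      div_sqrt_add_sq_divSqrtOneSubSq hc (hsq z hz)]
  rw [← setIntegral_univ, ← himage, integral_image_eq_integral_abs_deriv_smul measurableSet_Ioo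
    (fun y hy => (hasDerivAt_divSqrtOneSubSq c (hsq y hy)).hasDerivWithinAt) hinj]
  refine setIntegral_congr_fun measurableSet_Ioo fun y hy => ?_
  have : 0 < 1 - y ^ 2 := by linarith [hsq y hy]
  rw [div_sqrt_add_sq_divSqrtOneSubSq hc (hsq y hy), smul_eq_mul, abs_of_pos (by positivity)]

theorem integral_one_add_rpow_mul_one_sub_rpow_div_rpow {c K a b α : ℝ} (hc : 0 < c)
    (hK : 0 ≤ K) (hp : 0 < α * a - 1 / 2) (hq : 0 < α * b - 1 / 2) :
    ∫ x, ((1 + x / √(c + x ^ 2)) ^ a * (1 - x / √(c + x ^ 2)) ^ b / K) ^ α =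
      √c / K ^ α * 2 ^ (α * (a + b) - 2) * betaFn (α * a - 1 / 2) (α * b - 1 / 2) := by
  rw [integral_comp_div_sqrt_add_sq hc (fun y => ((1 + y) ^ a * (1 - y) ^ b / K) ^ α)]
  calc ∫ y in Ioo (-1 : ℝ) 1,
        √c * (1 - y ^ 2) ^ (-(3 / 2) : ℝ) * ((1 + y) ^ a * (1 - y) ^ b / K) ^ α
      = ∫ y in Ioo (-1 : ℝ) 1, √c / K ^ α *
          ((1 + y) ^ (α * a - 1 / 2 - 1) * (1 - y) ^ (α * b - 1 / 2 - 1)) := by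
        refine setIntegral_congr_fun measurableSet_Ioo fun y ⟨hy₁, hy₂⟩ => ?_
        have hu : 0 < 1 + y := by linarith
        have hv : 0 < 1 - y := by linarith
        rw [show 1 - y ^ 2 = (1 + y) * (1 - y) by ring, mul_rpow hu.le hv.le,
          div_rpow (by positivity) hK, mul_rpow (by positivity) (by positivity),
          ← rpow_mul hu.le, ← rpow_mul hv.le,
          show α * a - 1 / 2 - 1 = a * α + -(3 / 2) by ring,
          show α * b - 1 / 2 - 1 = b * α + -(3 / 2) by ring,
          rpow_add hu, rpow_add hv]
        ring
    _ = _ := by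
        rw [integral_const_mul, integral_Ioo_one_add_rpow_mul_one_sub_rpow hp hq]
        ring_nf

theorem renyi_skew_t_general (γ β α : ℝ) (hγ : 0 < γ) (hβ : 0 < β)
    (h1 : 0 < α * (γ + 1/2) - 1/2) (h2 : 0 < α * (β + 1/2) - 1/2) :
    (∫ x : ℝ,
      ((1 + x / Real.sqrt (γ + β + x^2)) ^ (γ + 1/2) *
        (1 - x / Real.sqrt (γ + β + x^2)) ^ (β + 1/2) /
          (betaFn γ β * Real.sqrt (γ + β) * 2 ^ (γ + β - 1))) ^ α) =
      4 ^ (α - 1) * betaFn (α * (γ + 1/2) - 1/2) (α * (β + 1/2) - 1/2) /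
        (Real.sqrt (β + γ) ^ (α - 1) * betaFn γ β ^ α)
    ∧ (1 / (1 - α)) * Real.log (∫ x : ℝ,
      ((1 + x / Real.sqrt (γ + β + x^2)) ^ (γ + 1/2) *
        (1 - x / Real.sqrt (γ + β + x^2)) ^ (β + 1/2) /
          (betaFn γ β * Real.sqrt (γ + β) * 2 ^ (γ + β - 1))) ^ α) =
    (1 / (1 - α)) * Real.log
      (4 ^ (α - 1) * betaFn (α * (γ + 1/2) - 1/2) (α * (β + 1/2) - 1/2) /
        (Real.sqrt (β + γ) ^ (α - 1) * betaFn γ β ^ α)) := by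
  -- `betaFn` is definitionally `ProbabilityTheory.beta`
  have hB : 0 < betaFn γ β := ProbabilityTheory.beta_pos hγ hβ
  have hs : 0 < √(γ + β) := sqrt_pos.mpr (by positivity)
  have hint := integral_one_add_rpow_mul_one_sub_rpow_div_rpow (c := γ + β) (by positivity)
    (by positivity : 0 ≤ betaFn γ β * √(γ + β) * 2 ^ (γ + β - 1)) h1 h2
  have hsα : √(γ + β) ^ α = √(γ + β) * √(γ + β) ^ (α - 1) := by
    conv_lhs => rw [show α = 1 + (α - 1) by ring]
    rw [rpow_add hs, rpow_one]
  have hconst : √(γ + β) / (betaFn γ β * √(γ + β) * 2 ^ (γ + β - 1)) ^ α *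
      2 ^ (α * (γ + 1 / 2 + (β + 1 / 2)) - 2) =
      4 ^ (α - 1) / (√(β + γ) ^ (α - 1) * betaFn γ β ^ α) := by
    rw [add_comm β γ, mul_rpow (by positivity) (by positivity), mul_rpow hB.le hs.le,
      ← rpow_mul zero_le_two, show (4 : ℝ) = 2 ^ (2 : ℝ) by norm_num, ← rpow_mul zero_le_two,
      show α * (γ + 1 / 2 + (β + 1 / 2)) - 2 = (γ + β - 1) * α + 2 * (α - 1) by ring,
      rpow_add two_pos, hsα]
    field_simp
  rw [hint, hconst, div_mul_eq_mul_div]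
  exact ⟨rfl, rfl⟩

theorem renyi_skew_t (γ β α : ℝ) (hγ : 0 < γ) (hβ : 0 < β) (hα : 0 < α)
    (h1 : 0 < α * (γ + 1/2) - 1/2) (h2 : 0 < α * (β + 1/2) - 1/2) (hα1 : α ≠ 1) :
    (∫ x : ℝ,
      ((1 + x / Real.sqrt (γ + β + x^2)) ^ (γ + 1/2) *
        (1 - x / Real.sqrt (γ + β + x^2)) ^ (β + 1/2) /
          (betaFn γ β * Real.sqrt (γ + β) * 2 ^ (γ + β - 1))) ^ α) =
      4 ^ (α - 1) * betaFn (α * (γ + 1/2) - 1/2) (α * (β + 1/2) - 1/2) /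
        (Real.sqrt (β + γ) ^ (α - 1) * betaFn γ β ^ α)
    ∧ (1 / (1 - α)) * Real.log (∫ x : ℝ,
      ((1 + x / Real.sqrt (γ + β + x^2)) ^ (γ + 1/2) *
        (1 - x / Real.sqrt (γ + β + x^2)) ^ (β + 1/2) /
          (betaFn γ β * Real.sqrt (γ + β) * 2 ^ (γ + β - 1))) ^ α) =
    (1 / (1 - α)) * Real.log
      (4 ^ (α - 1) * betaFn (α * (γ + 1/2) - 1/2) (α * (β + 1/2) - 1/2) /
        (Real.sqrt (β + γ) ^ (α - 1) * betaFn γ β ^ α)) :=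
  renyi_skew_t_general γ β α hγ hβ h1 h2
end
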